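/- arXiv:1602.06328 — 3 statements merged into one kernel-verified Lean document; each statement's English description precedes it below -/
import Mathlib

section
/- Let q be a positive integer and let χ be a primitive Dirichlet character modulo q that is not real-valued (so χ ≠ χ̄, where χ̄ is the complex-conjugate character). Let κ ∈ {0,1} be determined by χ(−1) = (−1)^κ, and let θ ∈ ℝ satisfy e^{2iθ} = ε(χ) and cos θ ≠ 0. Then the function f(s) = (1/2) sec θ · [e^{−iθ} L(s, χ) + e^{iθ} L(s, χ̄)] satisfies the Riemann-type functional equation f(s) = W(s) · f(1−s) for every s ∈ ℂ that is not an integer, where W(s) = 2^s q^{1/2−s} π^{s−1} Γ(1−s) sin(π(s+κ)/2). -/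
open Complex DirichletCharacter

/-- The complex-conjugate character of a Dirichlet character `χ` (with values in `ℂ`). -/
noncomputable def conjChar {q : ℕ} (χ : DirichletCharacter ℂ q) : DirichletCharacter ℂ q :=
  χ.ringHomComp (starRingEnd ℂ)

/-- The Gauss sum `τ(χ) = ∑_{k=1}^{q} χ(k) exp(2πik/q)`. -/
noncomputable def tau {q : ℕ} (χ : DirichletCharacter ℂ q) : ℂ :=
  ∑ k ∈ Finset.Icc 1 q, χ (k : ZMod q) * Complex.exp (2 * Real.pi * I * k / q)

/-- `ε(χ) = τ(χ) / (i^κ √q)`. -/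
noncomputable def eps {q : ℕ} (κ : ℕ) (χ : DirichletCharacter ℂ q) : ℂ :=
  tau χ / (I ^ κ * Real.sqrt q)

/-!
For primitive `χ`, Fourier inversion on `ZMod q` turns the Hurwitz-zeta functional equation into
the asymmetric one `L(s, χ) = W(s) ε(χ) L(1 - s, χ̄)`, and `τ(χ) τ(χ̄) = χ(-1) q` gives
`ε(χ) ε(χ̄) = 1`. Writing `ε(χ) = e^{2iθ}`, the two summands of `f` are therefore exchanged:
`e^{-iθ} L(s, χ) = W(s) e^{iθ} L(1 - s, χ̄)` and `e^{iθ} L(s, χ̄) = W(s) e^{-iθ} L(1 - s, χ)`.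
-/

open scoped Real

namespace ZMod

lemma sum_Icc_one_natCast {N : ℕ} [NeZero N] {M : Type*} [AddCommMonoid M]
    (g : ZMod N → M) : ∑ k ∈ Finset.Icc 1 N, g k = ∑ a, g a := by
  refine Finset.sum_nbij' (fun k ↦ (k : ZMod N)) (fun a ↦ if a = 0 then N else a.val)
    (fun _ _ ↦ Finset.mem_univ _) (fun a _ ↦ ?_) (fun k hk ↦ ?_) (fun a _ ↦ ?_) (fun _ _ ↦ rfl)
  · split_ifs with ha
    · simp [Nat.one_le_iff_ne_zero, NeZero.ne]
    · simp [Nat.one_le_iff_ne_zero, (ZMod.val_lt a).le, ha]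
  · have hk : 1 ≤ k ∧ k ≤ N := by simpa using hk
    split_ifs with h
    · rw [ZMod.natCast_eq_zero_iff] at h
      exact (Nat.eq_of_dvd_of_lt_two_mul (by omega) h (by omega)).symm
    · rcases hk.2.lt_or_eq with hlt | rfl
      · exact ZMod.val_cast_of_lt hlt
      · simp at h
  · split_ifs with ha
    · simp [ha]
    · simp

lemma LFunction_const_mul {N : ℕ} [NeZero N] (a : ℂ) (Φ : ZMod N → ℂ) (s : ℂ) :
    LFunction (fun j ↦ a * Φ j) s = a * LFunction Φ s := by
  simp only [LFunction, Finset.mul_sum]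
  congr 1 with j
  ring

end ZMod

lemma two_mul_sin_pi_mul_add_nat_div_two (κ : ℕ) (s : ℂ) :
    2 * sin (π * (s + κ) / 2) =
      I ^ κ * ((-1) ^ κ * cexp (π * I * (1 - s) / 2) + cexp (-π * I * (1 - s) / 2)) := by
  have hκ : cexp (π * κ / 2 * I) = I ^ κ := by
    rw [show π * κ / 2 * I = κ * (π / 2 * I) by ring, exp_nat_mul, exp_pi_div_two_mul_I]
  have hκ' : cexp (-(π * κ / 2) * I) = (-I) ^ κ := by
    rw [neg_mul, exp_neg, hκ, ← inv_pow, inv_I]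
  have h1 : cexp (π * I * (1 - s) / 2) = I * cexp (-(π * s / 2) * I) := by
    rw [show π * I * (1 - s) / 2 = π / 2 * I + -(π * s / 2) * I by ring, exp_add,
      exp_pi_div_two_mul_I]
  have h2 : cexp (-π * I * (1 - s) / 2) = -I * cexp (π * s / 2 * I) := by
    rw [show -π * I * (1 - s) / 2 = -(π / 2 * I) + π * s / 2 * I by ring, exp_add, exp_neg,
      exp_pi_div_two_mul_I, inv_I]
  rw [sin, h1, h2, show π * (s + κ) / 2 = π * s / 2 + π * κ / 2 by ring, neg_add, add_mul,
    add_mul, exp_add, exp_add, hκ, hκ', neg_pow I]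
  ring_nf

lemma natCast_cpow_one_half_sub {q : ℕ} (hq : q ≠ 0) (s : ℂ) :
    (q : ℂ) ^ ((1 : ℂ) / 2 - s) = Real.sqrt q * (q : ℂ) ^ (-s) := by
  rw [sub_eq_add_neg, cpow_add _ _ (Nat.cast_ne_zero.mpr hq), Real.sqrt_eq_rpow,
    ofReal_cpow q.cast_nonneg]
  norm_num

/-- The factor `W(s)` of the functional equation. -/
noncomputable def functionalEquationFactor (q κ : ℕ) (s : ℂ) : ℂ :=
  2 ^ s * (q : ℂ) ^ ((1 : ℂ) / 2 - s) * (π : ℂ) ^ (s - 1) * Gamma (1 - s) *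
    sin (π * (s + κ) / 2)

namespace DirichletCharacter

lemma apply_neg_one_mul_self {R : Type*} [CommMonoidWithZero R] {N : ℕ}
    (χ : DirichletCharacter R N) : χ (-1) * χ (-1) = 1 := by
  rw [← map_mul, neg_mul_neg, one_mul, map_one]

lemma inv_apply_neg_one {R : Type*} [Field R] {N : ℕ} (χ : DirichletCharacter R N) :
    χ⁻¹ (-1) = χ (-1) := by
  rw [MulChar.inv_apply_eq_inv']
  exact inv_eq_of_mul_eq_one_right χ.apply_neg_one_mul_self

lemma IsPrimitive.inv {R : Type*} [CommMonoidWithZero R] {N : ℕ} {χ : DirichletCharacter R N}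
    (hχ : χ.IsPrimitive) : χ⁻¹.IsPrimitive :=
  (conductor_inv χ).trans hχ

section Primitive

open ZMod

variable {N : ℕ} [NeZero N] {χ : DirichletCharacter ℂ N}

lemma IsPrimitive.dft_eq (hχ : χ.IsPrimitive) :
    𝓕 χ = fun k ↦ χ (-1) * gaussSum χ stdAddChar * χ⁻¹ k := by
  ext k
  rw [hχ.fourierTransform_eq_inv_mul_gaussSum, neg_eq_neg_one_mul, map_mul, inv_apply_neg_one]
  ring

lemma IsPrimitive.gaussSum_mul_gaussSum_inv (hχ : χ.IsPrimitive) :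
    gaussSum χ stdAddChar * gaussSum χ⁻¹ stdAddChar = χ (-1) * N := by
  -- Fourier inversion `𝓕 (𝓕 χ) = N • χ (-·)` at `-1`
  have h := congrFun (dft_dft (χ : ZMod N → ℂ)) (-1)
  rw [hχ.dft_eq, dft_const_mul, hχ.inv.dft_eq, inv_inv, inv_apply_neg_one] at h
  simp only [neg_neg, map_one, smul_eq_mul, mul_one] at h
  linear_combination χ (-1) * h -
    (χ (-1) ^ 2 + 1) * gaussSum χ stdAddChar * gaussSum χ⁻¹ stdAddChar * χ.apply_neg_one_mul_self

theorem IsPrimitive.LFunction_one_sub (hχ : χ.IsPrimitive) {s : ℂ} (hs : ∀ n : ℕ, s ≠ -n)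
    (hs' : N ≠ 1 ∨ s ≠ 1) :
    LFunction χ (1 - s) = N ^ (s - 1) * (2 * π) ^ (-s) * Gamma s * gaussSum χ stdAddChar *
      (χ (-1) * cexp (π * I * s / 2) + cexp (-π * I * s / 2)) * LFunction χ⁻¹ s := by
  have hdft_neg : 𝓕 (fun j ↦ χ (-j)) = fun k ↦ gaussSum χ stdAddChar * χ⁻¹ k := by
    ext k
    rw [dft_comp_neg, hχ.dft_eq]
    dsimp only
    rw [neg_eq_neg_one_mul k, map_mul, inv_apply_neg_one]
    linear_combination gaussSum χ stdAddChar * χ⁻¹ k * χ.apply_neg_one_mul_self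
  unfold LFunction
  rw [ZMod.LFunction_one_sub _ hs (hs'.imp_left χ.map_zero'), hχ.dft_eq, hdft_neg,
    LFunction_const_mul, LFunction_const_mul]
  ring

end Primitive

lemma tau_eq_gaussSum {q : ℕ} [NeZero q] (χ : DirichletCharacter ℂ q) :
    tau χ = gaussSum χ ZMod.stdAddChar := by
  rw [gaussSum, ← ZMod.sum_Icc_one_natCast, tau]
  refine Finset.sum_congr rfl fun k _ ↦ ?_
  rw [← Int.cast_natCast (R := ZMod q), ZMod.stdAddChar_coe]
  norm_cast

lemma conjChar_eq_inv {q : ℕ} [NeZero q] (χ : DirichletCharacter ℂ q) : conjChar χ = χ⁻¹ :=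
  MulChar.star_eq_inv χ

variable {q : ℕ} [NeZero q] {χ : DirichletCharacter ℂ q} {κ : ℕ}

lemma IsPrimitive.eps_mul_eps_inv (hχ : χ.IsPrimitive) (hκ : χ (-1) = (-1) ^ κ) :
    eps κ χ * eps κ χ⁻¹ = 1 := by
  have hsq : (I ^ κ * Real.sqrt q) * (I ^ κ * Real.sqrt q) = (-1) ^ κ * (q : ℂ) := by
    rw [mul_mul_mul_comm, ← mul_pow, I_mul_I, ← ofReal_mul, Real.mul_self_sqrt q.cast_nonneg,
      ofReal_natCast]
  rw [eps, eps, tau_eq_gaussSum, tau_eq_gaussSum, div_mul_div_comm,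
    hχ.gaussSum_mul_gaussSum_inv, hκ, hsq, div_self]
  exact mul_ne_zero (pow_ne_zero _ (by norm_num)) (Nat.cast_ne_zero.mpr (NeZero.ne q))

theorem IsPrimitive.LFunction_eq_functionalEquationFactor_mul (hχ : χ.IsPrimitive)
    (hκ : χ (-1) = (-1) ^ κ) {s : ℂ} (hs : ∀ n : ℕ, s ≠ n + 1) (hs₀ : q ≠ 1 ∨ s ≠ 0) :
    LFunction χ s = functionalEquationFactor q κ s * eps κ χ * LFunction χ⁻¹ (1 - s) := by
  have h := hχ.LFunction_one_sub (s := 1 - s) (fun n h ↦ hs n (by linear_combination -h))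
    (hs₀.imp_right fun h h' ↦ h (by linear_combination -h'))
  rw [sub_sub_cancel, sub_sub_cancel_left, neg_sub] at h
  have hsin := two_mul_sin_pi_mul_add_nat_div_two κ s
  have hsqrt : (Real.sqrt q : ℂ) ≠ 0 := by simp [NeZero.ne q]
  have hI : I ^ κ ≠ 0 := pow_ne_zero _ I_ne_zero
  have h2π : (2 * π : ℂ) ^ (s - 1) = 2 ^ (s - 1) * (π : ℂ) ^ (s - 1) := by
    exact_mod_cast mul_cpow_ofReal_nonneg zero_le_two Real.pi_pos.le (s - 1)
  have h2 : (2 : ℂ) ^ s = 2 * 2 ^ (s - 1) := by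
    rw [cpow_sub _ _ two_ne_zero, cpow_one]
    field_simp
  rw [h, functionalEquationFactor, eps, tau_eq_gaussSum, natCast_cpow_one_half_sub (NeZero.ne q),
    hκ, h2π, h2]
  generalize cexp (π * I * (1 - s) / 2) = a at hsin ⊢
  generalize cexp (-π * I * (1 - s) / 2) = b at hsin ⊢
  field_simp
  linear_combination (-(q : ℂ) ^ (-s) * Gamma (1 - s) * gaussSum χ ZMod.stdAddChar *
    LFunction χ⁻¹ (1 - s)) * hsin

end DirichletCharacter

theorem davenport_heilbronn_type_functional_equation_general
    (q : ℕ) [NeZero q] (χ : DirichletCharacter ℂ q)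
    (hprim : χ.IsPrimitive)
    (κ : ℕ) (hparity : χ (-1) = (-1 : ℂ) ^ κ)
    (θ : ℝ) (hθ : Complex.exp (2 * I * θ) = eps κ χ)
    (f : ℂ → ℂ)
    (hf : ∀ s : ℂ, f s = (1 / 2) * ((Real.cos θ : ℂ))⁻¹ *
      (Complex.exp (-(I * θ)) * LFunction χ s +
        Complex.exp (I * θ) * LFunction (conjChar χ) s)) :
    ∀ s : ℂ, (∀ n : ℤ, s ≠ (n : ℂ)) →
      f s = (2 : ℂ) ^ s * (q : ℂ) ^ ((1 : ℂ) / 2 - s) * (Real.pi : ℂ) ^ (s - 1) *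
        Complex.Gamma (1 - s) * Complex.sin (Real.pi * (s + κ) / 2) * f (1 - s) := by
  intro s hs
  have hs₁ (n : ℕ) : s ≠ n + 1 := by exact_mod_cast hs (n + 1)
  have hs₀ : q ≠ 1 ∨ s ≠ 0 := Or.inr (by exact_mod_cast hs 0)
  have hε : eps κ χ = cexp (I * θ) ^ 2 := by
    rw [← hθ, ← exp_nat_mul]
    ring_nf
  have hε_inv : eps κ χ⁻¹ = (cexp (I * θ) ^ 2)⁻¹ :=
    eq_inv_of_mul_eq_one_right (hε ▸ hprim.eps_mul_eps_inv hparity)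
  rw [hf, hf, conjChar_eq_inv, hprim.LFunction_eq_functionalEquationFactor_mul hparity hs₁ hs₀,
    hprim.inv.LFunction_eq_functionalEquationFactor_mul
      ((χ.inv_apply_neg_one).trans hparity) hs₁ hs₀, inv_inv, hε, hε_inv, exp_neg,
    functionalEquationFactor]
  field_simp
  ring

/-- Let `χ` be a primitive, non-real-valued Dirichlet character mod `q > 0`,
with parity `κ ∈ {0,1}` and `θ ∈ ℝ` with `e^{2iθ} = ε(χ)` and `cos θ ≠ 0`.  Then
`f(s) = ½ sec θ (e^{-iθ} L(s,χ) + e^{iθ} L(s,χ̄))` satisfies the Riemann-type functional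
equation `f(s) = W(s) f(1-s)` for all non-integer `s`, where
`W(s) = 2^s q^{1/2-s} π^{s-1} Γ(1-s) sin(π(s+κ)/2)`. -/
theorem davenport_heilbronn_type_functional_equation
    (q : ℕ) [NeZero q] (χ : DirichletCharacter ℂ q)
    (hprim : χ.IsPrimitive) (hnotreal : χ ≠ conjChar χ)
    (κ : ℕ) (hκ : κ = 0 ∨ κ = 1) (hparity : χ (-1) = (-1 : ℂ) ^ κ)
    (θ : ℝ) (hθ : Complex.exp (2 * I * θ) = eps κ χ) (hcos : Real.cos θ ≠ 0)
    (f : ℂ → ℂ)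
    (hf : ∀ s : ℂ, f s = (1 / 2) * ((Real.cos θ : ℂ))⁻¹ *
      (Complex.exp (-(I * θ)) * LFunction χ s +
        Complex.exp (I * θ) * LFunction (conjChar χ) s)) :
    ∀ s : ℂ, (∀ n : ℤ, s ≠ (n : ℂ)) →
      f s = (2 : ℂ) ^ s * (q : ℂ) ^ ((1 : ℂ) / 2 - s) * (Real.pi : ℂ) ^ (s - 1) *
        Complex.Gamma (1 - s) * Complex.sin (Real.pi * (s + κ) / 2) * f (1 - s) :=
  davenport_heilbronn_type_functional_equation_general q χ hprim κ hparity θ hθ f hf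
end

section
/- The character χ₅ is odd (χ₅(−1) = −1), and its root number satisfies ε(χ₅) = τ(χ₅)/(i√5) = e^{2iθ}, where θ ∈ (0, π/2) is the real number with tan²θ = (√2 − √(1 + 1/√5)) / (√2 + √(1 + 1/√5)). -/
open Complex DirichletCharacter

section RealLemmas
open Real

private lemma s5_pos : (0:ℝ) < Real.sqrt 5 := Real.sqrt_pos.2 (by norm_num)
private lemma s5_sq : Real.sqrt 5 ^ 2 = 5 := Real.sq_sqrt (by norm_num)
private lemma s2_pos : (0:ℝ) < Real.sqrt 2 := Real.sqrt_pos.2 (by norm_num)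
private lemma s2_sq : Real.sqrt 2 ^ 2 = 2 := Real.sq_sqrt (by norm_num)

private noncomputable def sS : ℝ := Real.sqrt (1 + 1 / Real.sqrt 5)
private lemma sS_nonneg : 0 ≤ sS := Real.sqrt_nonneg _
private lemma sS_sq : sS ^ 2 = 1 + 1 / Real.sqrt 5 := Real.sq_sqrt (by positivity)

private lemma cos25 : Real.cos (2*π/5) = (Real.sqrt 5 - 1)/4 := by
  have h : (2*π/5 : ℝ) = 2 * (π/5) := by ring
  rw [h, Real.cos_two_mul, Real.cos_pi_div_five]
  nlinarith [s5_sq]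

private lemma sin15_sq : Real.sin (π/5) ^ 2 = (10 - 2*Real.sqrt 5)/16 := by
  have := Real.sin_sq_add_cos_sq (π/5)
  rw [Real.cos_pi_div_five] at this
  nlinarith [s5_sq]

private lemma sin25_sq : Real.sin (2*π/5) ^ 2 = (10 + 2*Real.sqrt 5)/16 := by
  have := Real.sin_sq_add_cos_sq (2*π/5)
  rw [cos25] at this
  nlinarith [s5_sq]

private lemma sin15_nonneg : 0 ≤ Real.sin (π/5) :=
  Real.sin_nonneg_of_nonneg_of_le_pi (by positivity) (by linarith [pi_pos])
private lemma sin25_nonneg : 0 ≤ Real.sin (2*π/5) :=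
  Real.sin_nonneg_of_nonneg_of_le_pi (by positivity) (by linarith [pi_pos])

private lemma cos2θ (θ : ℝ) (hθ : θ ∈ Set.Ioo 0 (π/2))
    (htan : Real.tan θ ^ 2 = (Real.sqrt 2 - sS) / (Real.sqrt 2 + sS)) :
    Real.cos (2*θ) * Real.sqrt 2 = sS := by
  obtain ⟨h0, h2⟩ := hθ
  have hc : 0 < Real.cos θ := Real.cos_pos_of_mem_Ioo ⟨by linarith [pi_pos], h2⟩
  have hpyth := Real.sin_sq_add_cos_sq θ
  have ht : Real.tan θ ^ 2 = Real.sin θ ^ 2 / Real.cos θ ^ 2 := by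
    rw [Real.tan_eq_sin_div_cos]; ring
  have hden : (0:ℝ) < Real.sqrt 2 + sS := by
    have := sS_nonneg; linarith [s2_pos]
  have key : Real.sin θ ^ 2 * (Real.sqrt 2 + sS) = Real.cos θ ^ 2 * (Real.sqrt 2 - sS) := by
    have h1 : Real.sin θ ^ 2 / Real.cos θ ^ 2 = (Real.sqrt 2 - sS) / (Real.sqrt 2 + sS) := by
      rw [← ht, htan]
    field_simp at h1
    linarith [h1]
  rw [Real.cos_two_mul]
  nlinarith [key, hpyth, s2_sq, sq_nonneg (Real.cos θ)]

private lemma G1 (θ : ℝ) (hθ : θ ∈ Set.Ioo 0 (π/2))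
    (htan : Real.tan θ ^ 2 = (Real.sqrt 2 - sS) / (Real.sqrt 2 + sS)) :
    Real.sqrt 5 * Real.cos (2*θ) = 2 * Real.sin (2*π/5) := by
  have h := cos2θ θ hθ htan
  have hA : 0 ≤ Real.sqrt 5 * Real.cos (2*θ) := by
    have : 0 ≤ Real.cos (2*θ) := by
      nlinarith [sS_nonneg, s2_pos, h]
    positivity
  have hB : 0 ≤ 2 * Real.sin (2*π/5) := by linarith [sin25_nonneg]
  have hsq : (Real.sqrt 5 * Real.cos (2*θ))^2 = (2 * Real.sin (2*π/5))^2 := by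
    have h2 : Real.cos (2*θ)^2 * 2 = sS^2 := by rw [← h, mul_pow, s2_sq]
    rw [sS_sq] at h2
    have h5 : (1:ℝ)/Real.sqrt 5 = Real.sqrt 5 / 5 := by
      rw [div_eq_div_iff s5_pos.ne' (by norm_num)]; nlinarith [s5_sq]
    nlinarith [sin25_sq, s5_sq]
  nlinarith [hsq, hA, hB]

private lemma G2 (θ : ℝ) (hθ : θ ∈ Set.Ioo 0 (π/2))
    (htan : Real.tan θ ^ 2 = (Real.sqrt 2 - sS) / (Real.sqrt 2 + sS)) :
    Real.sqrt 5 * Real.sin (2*θ) = 2 * Real.sin (π/5) := by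
  have h := cos2θ θ hθ htan
  have hA : 0 ≤ Real.sin (2*θ) := by
    apply Real.sin_nonneg_of_nonneg_of_le_pi
    · linarith [hθ.1]
    · linarith [hθ.2]
  have hsq : (Real.sqrt 5 * Real.sin (2*θ))^2 = (2 * Real.sin (π/5))^2 := by
    have hpyth := Real.sin_sq_add_cos_sq (2*θ)
    have h2 : Real.cos (2*θ)^2 * 2 = sS^2 := by rw [← h, mul_pow, s2_sq]
    rw [sS_sq] at h2
    have h5 : (1:ℝ)/Real.sqrt 5 = Real.sqrt 5 / 5 := by
      rw [div_eq_div_iff s5_pos.ne' (by norm_num)]; nlinarith [s5_sq]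
    nlinarith [sin15_sq, s5_sq]
  nlinarith [hsq, hA, sin15_nonneg, s5_pos, mul_nonneg s5_pos.le hA]

end RealLemmas

private lemma expk (x : ℝ) : Complex.exp (2 * Real.pi * I * x / 5) =
    (Real.cos (2*Real.pi*x/5) : ℂ) + (Real.sin (2*Real.pi*x/5) : ℂ) * I := by
  have h : (2 * Real.pi * I * x / 5 : ℂ) = ((2*Real.pi*x/5 : ℝ) : ℂ) * I := by
    push_cast; ring
  rw [h, Complex.exp_mul_I, Complex.ofReal_cos, Complex.ofReal_sin]

/-- The character `χ₅` mod 5 with `χ₅(2) = i` is odd, and its root number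
satisfies `ε(χ₅) = τ(χ₅)/(i√5) = e^{2iθ}` where `θ ∈ (0, π/2)` satisfies
`tan²θ = (√2 - √(1+1/√5))/(√2 + √(1+1/√5))`. -/
theorem chi5_odd_and_root_number
    (χ₅ : DirichletCharacter ℂ 5) (hχ : χ₅ (2 : ZMod 5) = I)
    (θ : ℝ) (hθ : θ ∈ Set.Ioo 0 (Real.pi / 2))
    (htan : Real.tan θ ^ 2 =
      (Real.sqrt 2 - Real.sqrt (1 + 1 / Real.sqrt 5)) /
        (Real.sqrt 2 + Real.sqrt (1 + 1 / Real.sqrt 5))) :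
    χ₅ (-1 : ZMod 5) = -1 ∧
      tau χ₅ / (I * (Real.sqrt 5 : ℂ)) = Complex.exp (2 * I * θ) := by
  have htan' : Real.tan θ ^ 2 = (Real.sqrt 2 - sS) / (Real.sqrt 2 + sS) := htan
  constructor
  · have h : (-1 : ZMod 5) = 2 * 2 := by decide
    rw [h, map_mul, hχ, Complex.I_mul_I]
  · -- expand tau
    have htau : tau χ₅ = Complex.exp (2 * Real.pi * I * ((1:ℝ):ℂ) / 5)
        + I * Complex.exp (2 * Real.pi * I * ((2:ℝ):ℂ) / 5)
        - I * Complex.exp (2 * Real.pi * I * ((3:ℝ):ℂ) / 5)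
        - Complex.exp (2 * Real.pi * I * ((4:ℝ):ℂ) / 5) := by
      have h1 : χ₅ ((1:ℕ) : ZMod 5) = 1 := by norm_num
      have h2 : χ₅ ((2:ℕ) : ZMod 5) = I := by
        have : ((2:ℕ) : ZMod 5) = 2 := by decide
        rw [this, hχ]
      have h3 : χ₅ ((3:ℕ) : ZMod 5) = -I := by
        have : ((3:ℕ) : ZMod 5) = 2^3 := by decide
        rw [this, map_pow, hχ]
        simp [pow_succ, Complex.I_mul_I]
      have h4 : χ₅ ((4:ℕ) : ZMod 5) = -1 := by
        have : ((4:ℕ) : ZMod 5) = 2^2 := by decide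
        rw [this, map_pow, hχ, sq, Complex.I_mul_I]
      have h5 : χ₅ ((5:ℕ) : ZMod 5) = 0 := by
        have : ((5:ℕ) : ZMod 5) = 0 := by decide
        rw [this]; exact χ₅.map_nonunit (by decide)
      rw [tau, show (Finset.Icc 1 5 : Finset ℕ) = {1,2,3,4,5} by decide]
      rw [Finset.sum_insert (by decide), Finset.sum_insert (by decide),
          Finset.sum_insert (by decide), Finset.sum_insert (by decide), Finset.sum_singleton]
      rw [h1, h2, h3, h4, h5]
      push_cast
      ring
    have hne : (I * (Real.sqrt 5 : ℂ)) ≠ 0 := by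
      simp [Complex.I_ne_zero, Complex.ofReal_ne_zero, s5_pos.ne']
    rw [div_eq_iff hne, htau, expk 1, expk 2, expk 3, expk 4]
    have hexpθ : Complex.exp (2 * I * θ) =
        (Real.cos (2*θ) : ℂ) + (Real.sin (2*θ) : ℂ) * I := by
      have h : (2 * I * θ : ℂ) = ((2*θ : ℝ) : ℂ) * I := by push_cast; ring
      rw [h, Complex.exp_mul_I, Complex.ofReal_cos, Complex.ofReal_sin]
    rw [hexpθ]
    -- angle identities, cast to ℂ
    have pi := Real.pi_pos
    have A1 : ((Real.cos (2*Real.pi*4/5) : ℝ) : ℂ) = (Real.cos (2*Real.pi*1/5) : ℝ) := by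
      norm_cast
      rw [show (2*Real.pi*4/5 : ℝ) = 2*Real.pi - 2*Real.pi*1/5 by ring, Real.cos_two_pi_sub]
    have A2 : ((Real.sin (2*Real.pi*4/5) : ℝ) : ℂ) = -(Real.sin (2*Real.pi*1/5) : ℝ) := by
      norm_cast
      rw [show (2*Real.pi*4/5 : ℝ) = 2*Real.pi - 2*Real.pi*1/5 by ring, Real.sin_two_pi_sub]
    have A3 : ((Real.cos (2*Real.pi*3/5) : ℝ) : ℂ) = (Real.cos (2*Real.pi*2/5) : ℝ) := by
      norm_cast
      rw [show (2*Real.pi*3/5 : ℝ) = 2*Real.pi - 2*Real.pi*2/5 by ring, Real.cos_two_pi_sub]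
    have A4 : ((Real.sin (2*Real.pi*3/5) : ℝ) : ℂ) = -(Real.sin (2*Real.pi*2/5) : ℝ) := by
      norm_cast
      rw [show (2*Real.pi*3/5 : ℝ) = 2*Real.pi - 2*Real.pi*2/5 by ring, Real.sin_two_pi_sub]
    have A5 : ((Real.sqrt 5 : ℝ) : ℂ) * (Real.cos (2*θ) : ℝ) = 2 * (Real.sin (2*Real.pi*1/5) : ℝ) := by
      have := G1 θ hθ htan'
      norm_cast
      rw [show (2*Real.pi*1/5 : ℝ) = 2*Real.pi/5 by ring]
      exact this
    have A6 : ((Real.sqrt 5 : ℝ) : ℂ) * (Real.sin (2*θ) : ℝ) = 2 * (Real.sin (2*Real.pi*2/5) : ℝ) := by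
      have h := G2 θ hθ htan'
      norm_cast
      rw [show (2*Real.pi*2/5 : ℝ) = Real.pi - Real.pi/5 by ring, Real.sin_pi_sub]
      exact h
    linear_combination (-1 : ℂ) * A1 - I * A2 - I * A3 + A4 - I * A5 + A6 + ((Real.sin (2*Real.pi*2/5) : ℂ) - (Real.sin (2*Real.pi*3/5) : ℂ) - (Real.sqrt 5 : ℂ) * (Real.sin (2*θ) : ℂ)) * Complex.I_sq
end

section
/- Let f₁, f₂, W : ℂ → ℂ satisfy f_k(s) = W(s) · conj(f_k(1 − conj(s))) for all s ∈ ℂ and k = 1, 2, let s₀ ∈ ℂ, and define f(s) = f₁(s₀) f₂(s) − f₂(s₀) f₁(s). If there exists s₁ ∈ ℂ with W(s₁) ≠ 0 and Im(f₁(s₀)) · conj(f₂(1 − conj(s₁))) ≠ Im(f₂(s₀)) · conj(f₁(1 − conj(s₁))), then f(s₁) ≠ W(s₁) · conj(f(1 − conj(s₁))); in particular, f does not satisfy the same Riemann-type functional equation as f₁ and f₂. -/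
open Complex

/-- With `f₁, f₂` satisfying the same Riemann-type functional equation and
`f(s) = f₁(s₀) f₂(s) - f₂(s₀) f₁(s)`: if at some point `s₁` with `W(s₁) ≠ 0` the defect term
does not vanish, then `f` fails the functional equation at `s₁`. -/
theorem linear_combination_fails_functional_equation (f₁ f₂ W : ℂ → ℂ)
    (h₁ : ∀ s : ℂ, f₁ s = W s * (starRingEnd ℂ) (f₁ (1 - (starRingEnd ℂ) s)))
    (h₂ : ∀ s : ℂ, f₂ s = W s * (starRingEnd ℂ) (f₂ (1 - (starRingEnd ℂ) s)))
    (s₀ : ℂ) (f : ℂ → ℂ) (hf : ∀ s : ℂ, f s = f₁ s₀ * f₂ s - f₂ s₀ * f₁ s)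
    (s₁ : ℂ) (hW : W s₁ ≠ 0)
    (hne : ((f₁ s₀).im : ℂ) * (starRingEnd ℂ) (f₂ (1 - (starRingEnd ℂ) s₁)) ≠
      ((f₂ s₀).im : ℂ) * (starRingEnd ℂ) (f₁ (1 - (starRingEnd ℂ) s₁))) :
    f s₁ ≠ W s₁ * (starRingEnd ℂ) (f (1 - (starRingEnd ℂ) s₁)) := by
  intro heq
  apply hne
  set a := f₁ s₀ with ha
  set b := f₂ s₀ with hb
  set g₁ := (starRingEnd ℂ) (f₁ (1 - (starRingEnd ℂ) s₁)) with hg₁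
  set g₂ := (starRingEnd ℂ) (f₂ (1 - (starRingEnd ℂ) s₁)) with hg₂
  rw [hf, hf, h₁ s₁, h₂ s₁, map_sub, map_mul, map_mul] at heq
  have hc : W s₁ * ((a - (starRingEnd ℂ) a) * g₂) =
      W s₁ * ((b - (starRingEnd ℂ) b) * g₁) := by
    linear_combination heq
  have hc' := mul_left_cancel₀ hW hc
  rw [Complex.sub_conj a, Complex.sub_conj b] at hc'
  push_cast at hc'
  have h2I : (2 * I : ℂ) ≠ 0 := by
    simp [Complex.I_ne_zero]
  refine mul_left_cancel₀ h2I ?_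
  linear_combination hc'
end
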